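/- The function $\Phi(x) = \mathrm{sgn}(x)\cdot\mathbf{1}_{[1,3]}(|x|)\cdot\log\frac{1}{\big||x|-2\big|}$ on $\mathbb{R}$ is odd, unbounded, and belongs to $\mathrm{bmo}(\mathbb{R})$ (and hence to $\mathrm{BMO}(\mathbb{R})$). -/

import Mathlib

open MeasureTheory Filter Topology ENNReal

noncomputable section

/-- An open cube in `ℝ^d` with sides parallel to the coordinate axes. -/
structure Cube (d : ℕ) where
  corner : Fin d → ℝ
  side : ℝ
  side_pos : 0 < side

namespace Cube

variable {d : ℕ}

def toSet (Q : Cube d) : Set (Fin d → ℝ) :=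
  {x | ∀ i, Q.corner i < x i ∧ x i < Q.corner i + Q.side}

/-- the volume `|Q| = l(Q)^d` -/
def vol (Q : Cube d) : ℝ := Q.side ^ d

/-- the concentric double `2Q` -/
def double (Q : Cube d) : Cube d :=
  ⟨fun i => Q.corner i - Q.side / 2, 2 * Q.side, by have := Q.side_pos; linarith⟩

end Cube

/-- reflection in the coordinate hyperplane orthogonal to `e_j` -/
def reflCoord {d : ℕ} (j : Fin d) (x : Fin d → ℝ) : Fin d → ℝ :=
  Function.update x j (-(x j))

/-- the open half-space `{x : x·e_j > 0}` -/
def upperHS {d : ℕ} (j : Fin d) : Set (Fin d → ℝ) := {x | 0 < x j}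

/-- classical `H¹`-atom supported in the cube `Q` -/
def IsAtomIn {d : ℕ} (a : (Fin d → ℝ) → ℂ) (Q : Cube d) : Prop :=
  MemLp a 2 volume ∧ (∀ x, x ∉ Q.toSet → a x = 0) ∧ (∫ x, a x = 0) ∧
    eLpNorm a 2 volume ≤ ENNReal.ofReal (Real.sqrt Q.vol)⁻¹

def IsClassicalAtom {d : ℕ} (a : (Fin d → ℝ) → ℂ) : Prop := ∃ Q, IsAtomIn a Q

/-- an atomic decomposition of `F` (convergence of partial sums in `L¹`) -/
def H1Decomp {d : ℕ} (F : (Fin d → ℝ) → ℂ) (a : ℕ → (Fin d → ℝ) → ℂ) (lam : ℕ → ℝ) : Prop :=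
  (∀ i, IsClassicalAtom (a i)) ∧ Summable lam ∧
    Tendsto (fun n => ∫ x, ‖(∑ i ∈ Finset.range n, (lam i : ℂ) * a i x) - F x‖) atTop (𝓝 0)

/-- membership in the real Hardy space `H¹(ℝ^d)` via atomic decompositions -/
def MemH1 {d : ℕ} (F : (Fin d → ℝ) → ℂ) : Prop := ∃ a lam, H1Decomp F a lam

/-- the atomic `H¹` norm -/
def H1Norm {d : ℕ} (F : (Fin d → ℝ) → ℂ) : ℝ :=
  sInf {r | ∃ a lam, H1Decomp F a lam ∧ r = ∑' i, |lam i|}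

/-- mean oscillation `inf_c |Q|⁻¹ ∫_Q |F - c|` -/
def osc {d : ℕ} (F : (Fin d → ℝ) → ℂ) (Q : Cube d) : ℝ :=
  sInf {r | ∃ c : ℂ, r = (Q.vol)⁻¹ * ∫ x in Q.toSet, ‖F x - c‖}

/-- mean value of `|F|` over `Q` -/
def mvQ {d : ℕ} (F : (Fin d → ℝ) → ℂ) (Q : Cube d) : ℝ :=
  (Q.vol)⁻¹ * ∫ x in Q.toSet, ‖F x‖

/-- the mean `F_Q` -/
def meanOn {d : ℕ} (F : (Fin d → ℝ) → ℂ) (Q : Cube d) : ℂ :=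
  (Q.vol : ℂ)⁻¹ * ∫ x in Q.toSet, F x

/-- `|Q|⁻¹ ∫_Q |F - F_Q|` -/
def oscMean {d : ℕ} (F : (Fin d → ℝ) → ℂ) (Q : Cube d) : ℝ :=
  (Q.vol)⁻¹ * ∫ x in Q.toSet, ‖F x - meanOn F Q‖

/-- the `BMO` `*`-seminorm `sup_Q inf_c |Q|⁻¹∫_Q|F-c|` as an `ℝ≥0∞`-valued supremum -/
def BMOStar {d : ℕ} (F : (Fin d → ℝ) → ℂ) : ℝ≥0∞ :=
  ⨆ Q : Cube d, ENNReal.ofReal (osc F Q)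

/-- the `BMO` norm `sup_Q |Q|⁻¹∫_Q|F-F_Q|` as an `ℝ≥0∞`-valued supremum -/
def BMONorm {d : ℕ} (F : (Fin d → ℝ) → ℂ) : ℝ≥0∞ :=
  ⨆ Q : Cube d, ENNReal.ofReal (oscMean F Q)

/-- the real-valued `BMO` norm (for functions known to be in `BMO`) -/
def bmoSupMean {d : ℕ} (F : (Fin d → ℝ) → ℂ) : ℝ :=
  sSup {r | ∃ Q : Cube d, r = oscMean F Q}

/-- the local `bmo` `*`-norm with breaking point `a`:
`sup_{l(Q)<a} inf_c |Q|⁻¹∫_Q|F-c| + sup_{l(Q)≥a} |Q|⁻¹∫_Q|F|` -/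
def bmoStarA {d : ℕ} (a : ℝ) (F : (Fin d → ℝ) → ℂ) : ℝ≥0∞ :=
  (⨆ Q : {Q : Cube d // Q.side < a}, ENNReal.ofReal (osc F Q.1)) +
  (⨆ Q : {Q : Cube d // a ≤ Q.side}, ENNReal.ofReal (mvQ F Q.1))

/-- the Weyl chamber `ℝ^{d-k} × (0,∞)^k` -/
def chamber (d k : ℕ) : Set (Fin d → ℝ) :=
  {x | ∀ i : Fin d, d - k ≤ (i : ℕ) → 0 < x i}

/-- the group `{±1}^k` acting by sign changes on the last `k` coordinates -/
def signSet (d k : ℕ) : Finset (Fin d → Bool) :=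
  Finset.univ.filter (fun s => ∀ i : Fin d, (i : ℕ) < d - k → s i = false)

def signAct {d : ℕ} (s : Fin d → Bool) (x : Fin d → ℝ) : Fin d → ℝ :=
  fun i => if s i then -x i else x i

/-- `ε^η = ∏ εᵢ^{ηᵢ}` -/
def signChar {d : ℕ} (s η : Fin d → Bool) : ℝ :=
  ∏ i, if s i && η i then (-1 : ℝ) else 1

/-- the `η`-extension operator for the orthogonal root system `R_k` -/
def etaExt (d k : ℕ) (η : Fin d → Bool) (a : (Fin d → ℝ) → ℂ) : (Fin d → ℝ) → ℂ :=
  fun x => ∑ s ∈ signSet d k, ((signChar s η : ℝ) : ℂ) * a (signAct s x)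

/-- `Reta d k η true  = ℝ^{η,1}_+` and `Reta d k η false = ℝ^{η,0}_+` -/
def Reta (d k : ℕ) (η : Fin d → Bool) (v : Bool) : Set (Fin d → ℝ) :=
  {x | ∀ i : Fin d, d - k ≤ (i : ℕ) → η i = v → 0 < x i}

/-- `Φ(x) = sgn(x)·1_{[1,3]}(|x|)·log(1/||x|-2|)` on `ℝ` (as `Fin 1 → ℝ`). -/
def PhiFn : (Fin 1 → ℝ) → ℂ := fun x =>
  ((Real.sign (x 0) *
    (if |x 0| ∈ Set.Icc (1 : ℝ) 3 then Real.log (1 / |(|x 0| - 2)|) else 0) : ℝ) : ℂ)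

open Set

/-- truncated logarithm `max (log(1/|t|)) 0` -/
def Lfn (t : ℝ) : ℝ := if |t| ≤ 1 then Real.log (1 / |t|) else 0

lemma Lfn_eq (t : ℝ) : Lfn t = if |t| ≤ 1 then -Real.log t else 0 := by
  unfold Lfn; rw [one_div, Real.log_inv, Real.log_abs]

lemma Lfn_nonneg (t : ℝ) : 0 ≤ Lfn t := by
  rw [Lfn_eq]; split
  · have : Real.log |t| ≤ 0 := Real.log_nonpos (abs_nonneg t) ‹|t| ≤ 1›
    rw [Real.log_abs] at this; linarith
  · exact le_refl 0

lemma Lfn_eq_max (t : ℝ) : Lfn t = max (-Real.log t) 0 := by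
  rw [Lfn_eq]
  by_cases h : |t| ≤ 1
  · rw [if_pos h, max_eq_left]
    have : Real.log |t| ≤ 0 := Real.log_nonpos (abs_nonneg t) h
    rw [Real.log_abs] at this; linarith
  · rw [if_neg h, max_eq_right]
    push_neg at h
    have : 0 < Real.log |t| := Real.log_pos h
    rw [Real.log_abs] at this; linarith

lemma Lfn_measurable : Measurable Lfn := by
  unfold Lfn
  exact Measurable.ite (measurableSet_le (measurable_abs) measurable_const)
    ((Real.measurable_log.comp ((measurable_const.div measurable_abs)))) measurable_const



lemma g_intOn {M : ℝ} (hM : 0 < M) :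
    IntegrableOn (fun t => Real.log M - Real.log t) (Ioc 0 M) volume := by
  have hrpow : IntegrableOn (fun t : ℝ => t ^ (-(1/2) : ℝ)) (Ioc 0 M) volume := by
    have := (intervalIntegral.intervalIntegrable_rpow' (a := 0) (b := M)
      (r := -(1/2)) (by norm_num))
    rwa [intervalIntegrable_iff_integrableOn_Ioc_of_le hM.le] at this
  have hbound : IntegrableOn
      (fun t : ℝ => 2 * |Real.log M| + 2 * t ^ (-(1/2) : ℝ)) (Ioc 0 M) volume := by
    exact (integrableOn_const measure_Ioc_lt_top.ne).add (hrpow.const_mul 2)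
  refine Integrable.mono' hbound
    ((Real.measurable_log.const_sub _).aestronglyMeasurable) ?_
  rw [ae_restrict_iff' measurableSet_Ioc]
  filter_upwards with t ht
  rcases ht with ⟨ht0, htM⟩
  have hrp : (0:ℝ) < t ^ (-(1/2) : ℝ) := Real.rpow_pos_of_pos ht0 _
  have habs : |Real.log t| ≤ |Real.log M| + 2 * t ^ (-(1/2) : ℝ) := by
    rcases le_or_gt t 1 with h1 | h1
    · have hlt : Real.log t ≤ 0 := Real.log_nonpos ht0.le h1
      have hlog : Real.log (t ^ (-(1/2) : ℝ)) ≤ t ^ (-(1/2) : ℝ) - 1 :=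
        Real.log_le_sub_one_of_pos hrp
      rw [Real.log_rpow ht0] at hlog
      rw [abs_of_nonpos hlt]
      have : (0:ℝ) ≤ |Real.log M| := abs_nonneg _
      nlinarith
    · have hlt : 0 ≤ Real.log t := Real.log_nonneg h1.le
      rw [abs_of_nonneg hlt]
      have : Real.log t ≤ Real.log M := Real.log_le_log ht0 htM
      have h2 : Real.log M ≤ |Real.log M| := le_abs_self _
      linarith
  calc ‖Real.log M - Real.log t‖ ≤ |Real.log M| + |Real.log t| := abs_sub _ _
    _ ≤ 2 * |Real.log M| + 2 * t ^ (-(1/2) : ℝ) := by linarith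

lemma g_eval {M : ℝ} (hM : 0 < M) :
    ∫ t in Ioo (0:ℝ) M, (Real.log M - Real.log t) = M := by
  have hii : IntervalIntegrable (fun t => Real.log M - Real.log t) volume 0 M :=
    (intervalIntegrable_iff_integrableOn_Ioc_of_le hM.le).2 (g_intOn hM)
  have key : ∫ t in (0:ℝ)..M, (Real.log M - Real.log t) = M := by
    have := intervalIntegral.integral_eq_sub_of_hasDeriv_right_of_le
      (f := fun t => t * Real.log M - (t * Real.log t - t))
      (f' := fun t => Real.log M - Real.log t) hM.le
      (by
        exact ((continuous_id.mul continuous_const).sub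
          (Real.continuous_mul_log.sub continuous_id)).continuousOn)
      (by
        intro x hx
        have h1 : HasDerivAt (fun t : ℝ => t * Real.log M - (t * Real.log t - t))
            (1 * Real.log M - ((Real.log x + 1) - 1)) x :=
          ((hasDerivAt_id x).mul_const _).sub
            ((Real.hasDerivAt_mul_log hx.1.ne').sub (hasDerivAt_id x))
        have h2 : (1 * Real.log M - ((Real.log x + 1) - 1)) = Real.log M - Real.log x := by ring
        rw [h2] at h1
        exact h1.hasDerivWithinAt)
      hii
    rw [this]
    simp
  rw [← MeasureTheory.integral_Ioc_eq_integral_Ioo, ← intervalIntegral.integral_of_le hM.le]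
  exact key

lemma g_even (M : ℝ) (t : ℝ) :
    Real.log M - Real.log (-t) = Real.log M - Real.log t := by
  rw [Real.log_neg_eq_log]

lemma g_intOn_sym {M : ℝ} (hM : 0 < M) :
    IntegrableOn (fun t => Real.log M - Real.log t) (Ioo (-M) M) volume := by
  have h1 := g_intOn hM
  have h2 : IntegrableOn (fun t => Real.log M - Real.log t) (Ioc (-M) 0) volume := by
    have hii : IntervalIntegrable (fun t => Real.log M - Real.log t) volume (-M) 0 := by
      rw [IntervalIntegrable.iff_comp_neg]
      simp only [g_even, neg_neg, neg_zero]
      exact ((intervalIntegrable_iff_integrableOn_Ioc_of_le hM.le).2 (g_intOn hM)).symm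
    exact (intervalIntegrable_iff_integrableOn_Ioc_of_le (by linarith)).1 hii
  refine ((h2.union h1).mono_set ?_)
  intro t ht
  rcases le_or_gt t 0 with h | h
  · exact Or.inl ⟨ht.1, h⟩
  · exact Or.inr ⟨h, ht.2.le⟩

lemma g_eval_sym {M : ℝ} (hM : 0 < M) :
    ∫ t in Ioo (-M) M, (Real.log M - Real.log t) = 2 * M := by
  have hpos : IntervalIntegrable (fun t => Real.log M - Real.log t) volume 0 M :=
    (intervalIntegrable_iff_integrableOn_Ioc_of_le hM.le).2 (g_intOn hM)
  have hneg : IntervalIntegrable (fun t => Real.log M - Real.log t) volume (-M) 0 := by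
    rw [IntervalIntegrable.iff_comp_neg]
    simp only [g_even, neg_neg, neg_zero]
    exact hpos.symm
  have hneg_eval : ∫ t in (-M:ℝ)..0, (Real.log M - Real.log t) = M := by
    have h1 : ∫ t in (-M:ℝ)..0, (Real.log M - Real.log t)
        = ∫ t in (-M:ℝ)..0, (Real.log M - Real.log (-t)) := by
      simp only [g_even]
    rw [h1, intervalIntegral.integral_comp_neg (fun t => Real.log M - Real.log t)]
    rw [neg_zero, neg_neg, intervalIntegral.integral_of_le hM.le,
      MeasureTheory.integral_Ioc_eq_integral_Ioo]
    exact g_eval hM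
  have hpos_eval : ∫ t in (0:ℝ)..M, (Real.log M - Real.log t) = M := by
    rw [intervalIntegral.integral_of_le hM.le, MeasureTheory.integral_Ioc_eq_integral_Ioo]
    exact g_eval hM
  have := intervalIntegral.integral_add_adjacent_intervals hneg hpos
  rw [hneg_eval, hpos_eval] at this
  rw [← MeasureTheory.integral_Ioc_eq_integral_Ioo,
    ← intervalIntegral.integral_of_le (by linarith : (-M:ℝ) ≤ M), ← this]
  ring

lemma Lfn_integrable : Integrable Lfn (volume : Measure ℝ) := by
  have hB : Integrable ((Ioo (-1:ℝ) 1).indicator (fun t => Real.log 1 - Real.log t))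
      (volume : Measure ℝ) := by
    rw [integrable_indicator_iff measurableSet_Ioo]
    exact g_intOn_sym one_pos
  refine Integrable.mono' hB Lfn_measurable.aestronglyMeasurable ?_
  filter_upwards with t
  rw [Real.norm_eq_abs, abs_of_nonneg (Lfn_nonneg t)]
  by_cases h : t ∈ Ioo (-1:ℝ) 1
  · rw [indicator_of_mem h, Lfn_eq, if_pos (abs_le.2 ⟨h.1.le, h.2.le⟩), Real.log_one, zero_sub]
  · rw [indicator_of_notMem h, Lfn_eq]
    by_cases h1 : |t| ≤ 1
    · rw [if_pos h1]
      have h2 : |t| = 1 := by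
        rw [mem_Ioo, not_and_or, not_lt, not_lt] at h
        rcases h with h | h
        · exact le_antisymm h1 (by rw [abs_of_nonpos (by linarith)]; linarith)
        · exact le_antisymm h1 (by rw [abs_of_nonneg (by linarith)]; linarith)
      rw [← Real.log_abs, h2, Real.log_one]; norm_num
    · rw [if_neg h1]

lemma Lfn_integral_le : ∫ t, Lfn t ≤ 2 := by
  have hB : Integrable ((Ioo (-1:ℝ) 1).indicator (fun t => Real.log 1 - Real.log t))
      (volume : Measure ℝ) := by
    rw [integrable_indicator_iff measurableSet_Ioo]
    exact g_intOn_sym one_pos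
  have hmono : ∫ t, Lfn t ≤ ∫ t, (Ioo (-1:ℝ) 1).indicator (fun t => Real.log 1 - Real.log t) t := by
    refine integral_mono Lfn_integrable hB ?_
    intro t
    by_cases h : t ∈ Ioo (-1:ℝ) 1
    · rw [indicator_of_mem h, Lfn_eq, Real.log_one]
      rw [if_pos (abs_le.2 ⟨h.1.le, h.2.le⟩), zero_sub]
    · rw [indicator_of_notMem h, Lfn_eq]
      by_cases h1 : |t| ≤ 1
      · rw [if_pos h1]
        have h2 : |t| = 1 := by
          rw [mem_Ioo, not_and_or, not_lt, not_lt] at h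
          rcases h with h | h
          · exact le_antisymm h1 (by rw [abs_of_nonpos (by linarith)]; linarith)
          · exact le_antisymm h1 (by rw [abs_of_nonneg (by linarith)]; linarith)
        rw [← Real.log_abs, h2, Real.log_one]; norm_num
      · rw [if_neg h1]
  have heval : ∫ t, (Ioo (-1:ℝ) 1).indicator (fun t => Real.log 1 - Real.log t) t
      = ∫ t in Ioo (-1:ℝ) 1, (Real.log 1 - Real.log t) := integral_indicator measurableSet_Ioo
  have := g_eval_sym one_pos
  rw [Real.log_one] at this heval hmono
  calc ∫ t, Lfn t ≤ _ := hmono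
    _ = ∫ t in Ioo (-1:ℝ) 1, ((0:ℝ) - Real.log t) := heval
    _ ≤ 2 := by
        have h2 : ∫ t in Ioo (-(1:ℝ)) 1, ((0:ℝ) - Real.log t) = 2 * 1 := this
        rw [show Ioo (-1:ℝ) 1 = Ioo (-(1:ℝ)) 1 by norm_num, h2]; norm_num

lemma ae_ne_zero : ∀ᵐ t : ℝ, t ≠ (0:ℝ) := by
  have : volume ({(0:ℝ)} : Set ℝ) = 0 := Real.volume_singleton
  rw [ae_iff]
  convert this using 2
  ext t; simp

lemma L_osc (a h : ℝ) (hh : 0 < h) :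
    ∃ c : ℝ, ∫ t in Ioo a (a + h), |Lfn t - c| ≤ 6 * h := by
  set m := |a + h / 2| with hm
  set M := m + h with hMdef
  have hm0 : 0 ≤ m := abs_nonneg _
  have hM : 0 < M := by linarith
  refine ⟨max (-Real.log M) 0, ?_⟩
  have habs : ∀ t ∈ Ioo a (a + h), |t| ≤ m + h / 2 ∧ m - h / 2 ≤ |t| := by
    intro t ht
    rcases ht with ⟨ht1, ht2⟩
    have h1 : |t - (a + h / 2)| ≤ h / 2 := by
      rw [abs_le]; constructor <;> linarith
    constructor
    · have : |t| = |(t - (a + h/2)) + (a + h/2)| := by ring_nf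
      rw [this]
      calc |(t - (a + h/2)) + (a + h/2)| ≤ |t - (a + h/2)| + |a + h/2| := abs_add_le _ _
        _ ≤ m + h / 2 := by rw [← hm]; linarith
    · have h2 : m - |t| ≤ |(a + h/2) - t| := by
        rw [hm]; exact abs_sub_abs_le_abs_sub _ _
      rw [abs_sub_comm] at h2
      linarith
  have hptw : ∀ t ∈ Ioo a (a + h), t ≠ 0 →
      |Lfn t - max (-Real.log M) 0| ≤ Real.log M - Real.log t := by
    intro t ht ht0
    rw [Lfn_eq_max t]
    have h2 : Real.log t ≤ Real.log M := by
      rw [← Real.log_abs t]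
      exact Real.log_le_log (abs_pos.2 ht0) (le_trans (habs t ht).1 (by linarith))
    calc |max (-Real.log t) 0 - max (-Real.log M) 0|
        ≤ |(-Real.log t) - (-Real.log M)| := abs_max_sub_max_le_abs _ _ _
      _ = Real.log M - Real.log t := by rw [abs_of_nonneg (by linarith)]; ring
  rcases le_or_gt (2 * h) m with hc | hc
  · -- far case: pointwise bound by 1
    have hbd : ∀ t ∈ Ioo a (a + h), ‖|Lfn t - max (-Real.log M) 0|‖ ≤ 1 := by
      intro t ht
      have h2 := (habs t ht).2
      have ht0 : t ≠ 0 := by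
        intro h0; rw [h0, abs_zero] at h2; linarith
      rw [Real.norm_eq_abs, abs_abs]
      refine le_trans (hptw t ht ht0) ?_
      have h3 : Real.log M ≤ Real.log 2 + Real.log t := by
        rw [← Real.log_abs t, ← Real.log_mul (by norm_num) (by
          intro h0; rw [h0] at h2; linarith)]
        exact Real.log_le_log hM (by linarith)
      have h4 : Real.log 2 ≤ 1 := by
        have := Real.log_le_sub_one_of_pos (by norm_num : (0:ℝ) < 2)
        linarith
      linarith
    have hnorm := norm_setIntegral_le_of_norm_le_const (μ := volume)
      (s := Ioo a (a + h)) (f := fun t => |Lfn t - max (-Real.log M) 0|)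
      (by rw [Real.volume_Ioo]; exact ofReal_lt_top) hbd
    rw [measureReal_def] at hnorm
    have hμ : ((volume (Ioo a (a + h))).toReal : ℝ) = h := by
      rw [Real.volume_Ioo, ENNReal.toReal_ofReal (by linarith)]
      ring
    rw [hμ, one_mul] at hnorm
    calc ∫ t in Ioo a (a + h), |Lfn t - max (-Real.log M) 0|
        ≤ ‖∫ t in Ioo a (a + h), |Lfn t - max (-Real.log M) 0|‖ := le_abs_self _
      _ ≤ h := hnorm
      _ ≤ 6 * h := by linarith
  · -- near case
    have hM3 : M ≤ 3 * h := by rw [hMdef]; linarith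
    have hsub : Ioo a (a + h) ⊆ Ioo (-M) M := by
      intro t ht
      have := (habs t ht).1
      rw [mem_Ioo, ← abs_lt]
      calc |t| ≤ m + h / 2 := this
        _ < M := by rw [hMdef]; linarith
    have hgi := g_intOn_sym hM
    calc ∫ t in Ioo a (a + h), |Lfn t - max (-Real.log M) 0|
        ≤ ∫ t in Ioo a (a + h), (Real.log M - Real.log t) := by
          refine integral_mono_of_nonneg (Eventually.of_forall fun t => abs_nonneg _)
            (hgi.mono_set hsub) ?_
          rw [EventuallyLE, ae_restrict_iff' measurableSet_Ioo]
          filter_upwards [ae_ne_zero] with t ht0 ht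
          exact hptw t ht ht0
      _ ≤ ∫ t in Ioo (-M) M, (Real.log M - Real.log t) := by
          refine setIntegral_mono_set hgi ?_ (HasSubset.Subset.eventuallyLE hsub)
          rw [EventuallyLE, ae_restrict_iff' measurableSet_Ioo]
          filter_upwards [ae_ne_zero] with t ht0 ht
          have : Real.log t ≤ Real.log M := by
            rw [← Real.log_abs t]
            exact Real.log_le_log (abs_pos.2 ht0) (abs_lt.2 ⟨ht.1, ht.2⟩).le
          simp only [Pi.zero_apply]
          linarith
      _ = 2 * M := g_eval_sym hM
      _ ≤ 6 * h := by linarith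

def phiR (t : ℝ) : ℝ :=
  Real.sign t * (if |t| ∈ Set.Icc (1 : ℝ) 3 then Real.log (1 / |(|t| - 2)|) else 0)

lemma phiR_eq (t : ℝ) : phiR t = Lfn (t - 2) - Lfn (t + 2) := by
  rcases lt_trichotomy t 0 with ht | ht | ht
  · have hs : Real.sign t = -1 := Real.sign_of_neg ht
    have habs : |t| = -t := abs_of_neg ht
    have h1 : Lfn (t - 2) = 0 := by
      have hne : ¬ |t - 2| ≤ 1 := by
        rw [abs_of_neg (by linarith : t - 2 < 0)]; push_neg; linarith
      rw [Lfn_eq, if_neg hne]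
    have hmem : (|t| ∈ Set.Icc (1:ℝ) 3) ↔ |t + 2| ≤ 1 := by
      rw [habs, Set.mem_Icc, abs_le]
      constructor <;> (intro hx; constructor <;> linarith [hx.1, hx.2])
    have hlog : Real.log (1 / |(|t| - 2)|) = -Real.log (t + 2) := by
      rw [habs, show -t - 2 = -(t + 2) by ring, abs_neg, one_div, Real.log_inv, Real.log_abs]
    rw [h1, zero_sub, Lfn_eq]
    unfold phiR
    rw [hs]
    by_cases hP : |t + 2| ≤ 1
    · rw [if_pos (hmem.2 hP), if_pos hP, hlog]; ring
    · rw [if_neg (fun hx => hP (hmem.1 hx)), if_neg hP]; ring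
  · rw [ht]; unfold phiR; rw [Lfn_eq, Lfn_eq]; norm_num
  · have hs : Real.sign t = 1 := Real.sign_of_pos ht
    have habs : |t| = t := abs_of_pos ht
    have h2 : Lfn (t + 2) = 0 := by
      have hne : ¬ |t + 2| ≤ 1 := by
        rw [abs_of_pos (by linarith : (0:ℝ) < t + 2)]; push_neg; linarith
      rw [Lfn_eq, if_neg hne]
    have hmem : (|t| ∈ Set.Icc (1:ℝ) 3) ↔ |t - 2| ≤ 1 := by
      rw [habs, Set.mem_Icc, abs_le]
      constructor <;> (intro hx; constructor <;> linarith [hx.1, hx.2])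
    have hlog : Real.log (1 / |(|t| - 2)|) = -Real.log (t - 2) := by
      rw [habs, one_div, Real.log_inv, Real.log_abs]
    rw [h2, sub_zero, Lfn_eq]
    unfold phiR
    rw [hs, one_mul]
    by_cases hP : |t - 2| ≤ 1
    · rw [if_pos (hmem.2 hP), if_pos hP, hlog]
    · rw [if_neg (fun hx => hP (hmem.1 hx)), if_neg hP]

lemma phiR_odd (t : ℝ) : phiR (-t) = - phiR t := by
  unfold phiR
  rw [abs_neg, Real.sign_neg]
  ring

lemma phiR_abs_le (t : ℝ) : |phiR t| ≤ Lfn (t - 2) + Lfn (t + 2) := by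
  rw [phiR_eq]
  calc |Lfn (t - 2) - Lfn (t + 2)| ≤ |Lfn (t - 2)| + |Lfn (t + 2)| := abs_sub _ _
    _ = Lfn (t - 2) + Lfn (t + 2) := by
        rw [abs_of_nonneg (Lfn_nonneg _), abs_of_nonneg (Lfn_nonneg _)]

lemma cube_toSet (Q : Cube 1) :
    Q.toSet = (MeasurableEquiv.funUnique (Fin 1) ℝ) ⁻¹'
      (Set.Ioo (Q.corner 0) (Q.corner 0 + Q.side)) := by
  ext x
  have hd : (MeasurableEquiv.funUnique (Fin 1) ℝ) x = x 0 := rfl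
  simp only [Cube.toSet, Set.mem_setOf_eq, Set.mem_preimage, hd, Set.mem_Ioo]
  constructor
  · intro hx; exact hx 0
  · intro hx i
    have : i = 0 := Subsingleton.elim i 0
    rw [this]; exact hx

lemma cube_integral (F : ℝ → ℝ) (Q : Cube 1) :
    ∫ x in Q.toSet, F (x 0) = ∫ t in Set.Ioo (Q.corner 0) (Q.corner 0 + Q.side), F t := by
  rw [cube_toSet]
  exact (volume_preserving_funUnique (Fin 1) ℝ).setIntegral_preimage_emb
    (MeasurableEquiv.measurableEmbedding _) F _

lemma phi_shift_int (c : ℝ) (d : ℝ) (a b : ℝ) :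
    IntegrableOn (fun t => |Lfn (t - d) - c|) (Set.Ioo a b) volume := by
  have h1 : Integrable (fun t : ℝ => Lfn (t - d)) volume := Lfn_integrable.comp_sub_right d
  exact (h1.integrableOn.sub (integrableOn_const measure_Ioo_lt_top.ne)).abs

lemma shift_eval (f : ℝ → ℝ) (a b d : ℝ) (hab : a ≤ b) :
    ∫ t in Set.Ioo a b, f (t - d) = ∫ t in Set.Ioo (a - d) (b - d), f t := by
  rw [← integral_Ioc_eq_integral_Ioo, ← integral_Ioc_eq_integral_Ioo,
    ← intervalIntegral.integral_of_le hab,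
    ← intervalIntegral.integral_of_le (by linarith : a - d ≤ b - d)]
  exact intervalIntegral.integral_comp_sub_right f d

lemma osc_PhiFn_le (Q : Cube 1) : osc PhiFn Q ≤ 12 := by
  obtain ⟨c1, hc1⟩ := L_osc (Q.corner 0 - 2) Q.side Q.side_pos
  obtain ⟨c2, hc2⟩ := L_osc (Q.corner 0 + 2) Q.side Q.side_pos
  set a := Q.corner 0 with ha
  set h := Q.side with hh
  have hh0 : 0 < h := Q.side_pos
  have hvol : Q.vol = h := by simp [Cube.vol, hh]
  have hnorm : ∀ x : Fin 1 → ℝ, ‖PhiFn x - ((c1 - c2 : ℝ) : ℂ)‖ = |phiR (x 0) - (c1 - c2)| := by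
    intro x
    rw [show PhiFn x = ((phiR (x 0) : ℝ) : ℂ) from rfl, ← Complex.ofReal_sub,
      Complex.norm_real, Real.norm_eq_abs]
  have hint : ∫ x in Q.toSet, ‖PhiFn x - ((c1 - c2 : ℝ) : ℂ)‖
      = ∫ t in Set.Ioo a (a + h), |phiR t - (c1 - c2)| := by
    calc ∫ x in Q.toSet, ‖PhiFn x - ((c1 - c2 : ℝ) : ℂ)‖
        = ∫ x in Q.toSet, |phiR (x 0) - (c1 - c2)| := by simp only [hnorm]
      _ = _ := cube_integral (fun t => |phiR t - (c1 - c2)|) Q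
  have hint1 : IntegrableOn (fun t => |Lfn (t - 2) - c1|) (Set.Ioo a (a+h)) volume :=
    phi_shift_int c1 2 a (a+h)
  have hint2 : IntegrableOn (fun t => |Lfn (t + 2) - c2|) (Set.Ioo a (a+h)) volume := by
    have := phi_shift_int c2 (-2) a (a+h)
    simpa [sub_neg_eq_add] using this
  have hbound : ∫ t in Set.Ioo a (a + h), |phiR t - (c1 - c2)| ≤ 12 * h := by
    have e1 : ∫ t in Set.Ioo a (a+h), |Lfn (t - 2) - c1| ≤ 6 * h := by
      rw [shift_eval (fun t => |Lfn t - c1|) a (a+h) 2 (by linarith)]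
      rw [show Set.Ioo (a - 2) (a + h - 2) = Set.Ioo (a - 2) ((a - 2) + h) by ring_nf]
      exact hc1
    have e2 : ∫ t in Set.Ioo a (a+h), |Lfn (t + 2) - c2| ≤ 6 * h := by
      have h3 := shift_eval (fun t => |Lfn t - c2|) a (a+h) (-2) (by linarith)
      simp only [sub_neg_eq_add] at h3
      rw [h3, show Set.Ioo (a + 2) (a + h + 2) = Set.Ioo (a + 2) ((a + 2) + h) by ring_nf]
      exact hc2
    calc ∫ t in Set.Ioo a (a+h), |phiR t - (c1 - c2)|
        ≤ ∫ t in Set.Ioo a (a+h), (|Lfn (t - 2) - c1| + |Lfn (t + 2) - c2|) := by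
          refine integral_mono_of_nonneg (Filter.Eventually.of_forall fun t => abs_nonneg _)
            (hint1.add hint2) (Filter.Eventually.of_forall fun t => ?_)
          show |phiR t - (c1 - c2)| ≤ |Lfn (t - 2) - c1| + |Lfn (t + 2) - c2|
          rw [phiR_eq]
          calc |Lfn (t-2) - Lfn (t+2) - (c1 - c2)|
              = |(Lfn (t-2) - c1) - (Lfn (t+2) - c2)| := by ring_nf
            _ ≤ |Lfn (t-2) - c1| + |Lfn (t+2) - c2| := abs_sub _ _
      _ = (∫ t in Set.Ioo a (a+h), |Lfn (t - 2) - c1|)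
          + ∫ t in Set.Ioo a (a+h), |Lfn (t + 2) - c2| := integral_add hint1 hint2
      _ ≤ 6 * h + 6 * h := add_le_add e1 e2
      _ = 12 * h := by ring
  unfold osc
  refine le_trans (csInf_le ⟨0, fun r hr => ?_⟩ ⟨((c1 - c2 : ℝ) : ℂ), rfl⟩) ?_
  · obtain ⟨c, rfl⟩ := hr
    exact mul_nonneg (inv_nonneg.2 (by rw [hvol]; linarith))
      (integral_nonneg fun x => norm_nonneg _)
  · rw [hvol, hint]
    calc h⁻¹ * ∫ t in Set.Ioo a (a + h), |phiR t - (c1 - c2)|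
        ≤ h⁻¹ * (12 * h) := mul_le_mul_of_nonneg_left hbound (inv_nonneg.2 hh0.le)
      _ = 12 := by field_simp

lemma mv_PhiFn_le (Q : Cube 1) (hQs : 1 ≤ Q.side) : mvQ PhiFn Q ≤ 4 := by
  set a := Q.corner 0 with ha
  set h := Q.side with hh
  have hh0 : 0 < h := Q.side_pos
  have hvol : Q.vol = h := by simp [Cube.vol, hh]
  have hnorm : ∀ x : Fin 1 → ℝ, ‖PhiFn x‖ = |phiR (x 0)| := by
    intro x
    rw [show PhiFn x = ((phiR (x 0) : ℝ) : ℂ) from rfl, Complex.norm_real, Real.norm_eq_abs]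
  have hshift2 : Integrable (fun t : ℝ => Lfn (t + 2)) volume := by
    have := Lfn_integrable.comp_sub_right (-2)
    simpa [sub_neg_eq_add] using this
  have hsum : Integrable (fun t : ℝ => Lfn (t - 2) + Lfn (t + 2)) volume :=
    (Lfn_integrable.comp_sub_right 2).add hshift2
  have hbig : ∫ t in Set.Ioo a (a + h), |phiR t| ≤ 4 := by
    calc ∫ t in Set.Ioo a (a + h), |phiR t|
        ≤ ∫ t in Set.Ioo a (a + h), (Lfn (t - 2) + Lfn (t + 2)) := by
          refine integral_mono_of_nonneg (Filter.Eventually.of_forall fun t => abs_nonneg _)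
            hsum.integrableOn (Filter.Eventually.of_forall fun t => phiR_abs_le t)
      _ ≤ ∫ t, (Lfn (t - 2) + Lfn (t + 2)) := by
          refine setIntegral_le_integral hsum (Filter.Eventually.of_forall fun t => ?_)
          exact add_nonneg (Lfn_nonneg _) (Lfn_nonneg _)
      _ = (∫ t, Lfn (t - 2)) + ∫ t, Lfn (t + 2) :=
          integral_add (Lfn_integrable.comp_sub_right 2) hshift2
      _ ≤ 4 := by
          rw [integral_sub_right_eq_self Lfn 2, integral_add_right_eq_self Lfn 2]
          have := Lfn_integral_le; linarith
  unfold mvQ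
  rw [hvol]
  have hcube : (∫ x in Q.toSet, ‖PhiFn x‖) = ∫ t in Set.Ioo a (a + h), |phiR t| := by
    calc ∫ x in Q.toSet, ‖PhiFn x‖ = ∫ x in Q.toSet, |phiR (x 0)| := by simp only [hnorm]
      _ = _ := cube_integral (fun t => |phiR t|) Q
  rw [hcube]
  have hi : h⁻¹ ≤ 1 := by
    rw [← one_div]
    exact div_le_one_of_le₀ hQs (by linarith)
  calc h⁻¹ * ∫ t in Set.Ioo a (a + h), |phiR t|
      ≤ 1 * 4 := mul_le_mul hi hbig (integral_nonneg fun t => abs_nonneg _) one_pos.le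
    _ = 4 := by norm_num

/-- `Φ` is odd, unbounded, and belongs to `bmo(ℝ)` and hence to `BMO(ℝ)`. -/
theorem statement17 :
    (∀ x : Fin 1 → ℝ, PhiFn (fun i => -(x i)) = -PhiFn x) ∧
    (∀ M : ℝ, ∃ x : Fin 1 → ℝ, M < ‖PhiFn x‖) ∧
    bmoStarA 1 PhiFn < ⊤ ∧ BMOStar PhiFn < ⊤ := by
  refine ⟨?_, ?_, ?_, ?_⟩
  · intro x
    show ((phiR (-(x 0)) : ℝ) : ℂ) = -((phiR (x 0) : ℝ) : ℂ)
    rw [phiR_odd, Complex.ofReal_neg]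
  · intro M
    refine ⟨fun _ => 2 + Real.exp (-(|M| + 1)), ?_⟩
    set e := Real.exp (-(|M| + 1)) with he
    have he0 : 0 < e := Real.exp_pos _
    have he1 : e < 1 := by
      rw [he]
      have hlt : -(|M| + 1) < 0 := by have := abs_nonneg M; linarith
      calc Real.exp (-(|M| + 1)) < Real.exp 0 := Real.exp_lt_exp.2 hlt
        _ = 1 := Real.exp_zero
    show M < ‖((phiR (2 + e) : ℝ) : ℂ)‖
    have hval : phiR (2 + e) = |M| + 1 := by
      unfold phiR
      rw [Real.sign_of_pos (by linarith : (0:ℝ) < 2 + e),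
        abs_of_pos (by linarith : (0:ℝ) < 2 + e),
        if_pos (Set.mem_Icc.2 ⟨by linarith, by linarith⟩),
        show (2:ℝ) + e - 2 = e by ring, abs_of_pos he0, one_div, Real.log_inv, he,
        Real.log_exp]
      ring
    rw [hval, Complex.norm_real, Real.norm_eq_abs, abs_of_pos (by positivity)]
    have := le_abs_self M
    linarith
  · unfold bmoStarA
    have h1 : (⨆ Q : {Q : Cube 1 // Q.side < 1}, ENNReal.ofReal (osc PhiFn Q.1))
        ≤ ENNReal.ofReal 12 :=
      iSup_le fun Q => ENNReal.ofReal_le_ofReal (osc_PhiFn_le Q.1)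
    have h2 : (⨆ Q : {Q : Cube 1 // 1 ≤ Q.side}, ENNReal.ofReal (mvQ PhiFn Q.1))
        ≤ ENNReal.ofReal 4 :=
      iSup_le fun Q => ENNReal.ofReal_le_ofReal (mv_PhiFn_le Q.1 Q.2)
    exact lt_of_le_of_lt (add_le_add h1 h2)
      (ENNReal.add_lt_top.2 ⟨ENNReal.ofReal_lt_top, ENNReal.ofReal_lt_top⟩)
  · unfold BMOStar
    exact lt_of_le_of_lt
      (iSup_le fun Q => ENNReal.ofReal_le_ofReal (osc_PhiFn_le Q)) ENNReal.ofReal_lt_top
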